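/- arXiv:2404.04494 — 7 statements merged into one kernel-verified Lean document; each statement's English description precedes it below -/
import Mathlib

section
/- Let s_j(δ) = Σ_i w_i · exp(δ_j + μ_{ij}) / (1 + Σ_{k∈J} exp(δ_k + μ_{ik})) be the logit market share of product j, s_0(δ) = 1 − Σ_{k∈J} s_k(δ), and let S_j > 0 for j ∈ J and S_0 > 0 be observed shares with S_0 + Σ_{j∈J} S_j = 1. Fix γ ≥ 0. If δ satisfies δ_j = δ_j + (log S_j − log s_j(δ)) − γ(log S_0 − log s_0(δ)) for all j ∈ J, then s_j(δ) = S_j for all j ∈ J. -/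
/-!
Write `t = log S₀ - log s₀(δ)`. The fixed-point condition says `S_j = s_j(δ) e^{γ t}` for every
`j`, and by definition `S₀ = s₀(δ) e^t`. Both the observed and the model shares sum to one, so
`s₀ e^t + (∑ s_j) e^{γ t} = s₀ + ∑ s_j`; since `s₀ > 0` and `γ ≥ 0`, both exponentials lie on the
same side of `1`, which forces `t = 0` and hence `S_j = s_j(δ)`.
-/

open Real Finset

theorem eq_zero_of_mul_exp_add_mul_exp_mul_eq {a b γ t : ℝ} (ha : 0 < a) (hb : 0 ≤ b)
    (hγ : 0 ≤ γ) (h : a * exp t + b * exp (γ * t) = a + b) : t = 0 := by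
  rcases lt_trichotomy t 0 with ht | ht | ht
  · have h1 : exp t < 1 := exp_lt_one_iff.mpr ht
    have h2 : exp (γ * t) ≤ 1 := exp_le_one_iff.mpr (mul_nonpos_of_nonneg_of_nonpos hγ ht.le)
    nlinarith
  · exact ht
  · have h1 : 1 < exp t := one_lt_exp_iff.mpr ht
    have h2 : 1 ≤ exp (γ * t) := one_le_exp_iff.mpr (by positivity)
    nlinarith

theorem eq_mul_exp_of_log_sub_log_eq {x y c : ℝ} (hx : 0 < x) (hy : 0 < y)
    (h : log x - log y = c) : x = y * exp c := by
  rw [← h, exp_sub, exp_log hx, exp_log hy, mul_div_cancel₀ _ hy.ne']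

section Logit

variable {I J : Type*} [Fintype J] (μ : I → J → ℝ) (d : J → ℝ)

theorem one_add_sum_exp_pos (i : I) : 0 < 1 + ∑ k, exp (d k + μ i k) := by
  positivity

variable [Fintype I]

noncomputable def logitShare (w : I → ℝ) (μ : I → J → ℝ) (d : J → ℝ) (j : J) : ℝ :=
  ∑ i, w i * exp (d j + μ i j) / (1 + ∑ k, exp (d k + μ i k))

variable {w : I → ℝ}

theorem logitShare_pos [Nonempty I] (hw : ∀ i, 0 < w i) (j : J) : 0 < logitShare w μ d j :=
  sum_pos (fun i _ => div_pos (mul_pos (hw i) (exp_pos _)) (one_add_sum_exp_pos μ d i))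
    univ_nonempty

theorem one_sub_sum_logitShare (hwsum : ∑ i, w i = 1) :
    1 - ∑ j, logitShare w μ d j = ∑ i, w i / (1 + ∑ k, exp (d k + μ i k)) := by
  calc 1 - ∑ j, logitShare w μ d j
      = ∑ i, (w i - w i * (∑ k, exp (d k + μ i k)) / (1 + ∑ k, exp (d k + μ i k))) := by
        simp only [logitShare, sum_sub_distrib, hwsum, mul_sum, sum_div]
        rw [sum_comm]
    _ = ∑ i, w i / (1 + ∑ k, exp (d k + μ i k)) := sum_congr rfl fun i _ => by
        have hden := (one_add_sum_exp_pos μ d i).ne'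
        field_simp
        ring

theorem one_sub_sum_logitShare_pos [Nonempty I] (hw : ∀ i, 0 < w i) (hwsum : ∑ i, w i = 1) :
    0 < 1 - ∑ j, logitShare w μ d j := by
  rw [one_sub_sum_logitShare μ d hwsum]
  exact sum_pos (fun i _ => div_pos (hw i) (one_add_sum_exp_pos μ d i)) univ_nonempty

end Logit

theorem stmt0_general {I J : Type*} [Fintype I] [Fintype J] [Nonempty I]
    (w : I → ℝ) (μ : I → J → ℝ) (S : J → ℝ) (S0 : ℝ) (γ : ℝ) (δ : J → ℝ)
    (hw : ∀ i, 0 < w i) (hwsum : ∑ i, w i = 1)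
    (hS : ∀ j, 0 < S j) (hS0 : 0 < S0) (hsum : S0 + ∑ j, S j = 1)
    (hγ : 0 ≤ γ)
    (s : (J → ℝ) → J → ℝ)
    (hs : ∀ d j, s d j =
      ∑ i, w i * Real.exp (d j + μ i j) / (1 + ∑ k, Real.exp (d k + μ i k)))
    (s0 : (J → ℝ) → ℝ)
    (hs0 : ∀ d, s0 d = 1 - ∑ k, s d k)
    (hfix : ∀ j, δ j = δ j + (Real.log (S j) - Real.log (s δ j))
        - γ * (Real.log S0 - Real.log (s0 δ))) :
    ∀ j, s δ j = S j := by
  obtain rfl : s = logitShare w μ := funext fun d => funext (hs d)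
  obtain rfl : s0 = fun d => 1 - ∑ k, logitShare w μ d k := funext hs0
  set t := log S0 - log (1 - ∑ k, logitShare w μ δ k)
  have hSj : ∀ j, S j = logitShare w μ δ j * exp (γ * t) := fun j =>
    eq_mul_exp_of_log_sub_log_eq (hS j) (logitShare_pos μ δ hw j) (by linarith [hfix j])
  have hS0' : S0 = (1 - ∑ k, logitShare w μ δ k) * exp t :=
    eq_mul_exp_of_log_sub_log_eq hS0 (one_sub_sum_logitShare_pos μ δ hw hwsum) rfl
  have ht : t = 0 := by
    refine eq_zero_of_mul_exp_add_mul_exp_mul_eq (one_sub_sum_logitShare_pos μ δ hw hwsum)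
      (sum_nonneg fun j (_ : j ∈ univ) => (logitShare_pos μ δ hw j).le) hγ ?_
    rw [← hS0', sum_mul, ← sum_congr rfl fun j _ => hSj j, hsum]
    ring
  intro j
  rw [hSj j, ht, mul_zero, exp_zero, mul_one]

theorem stmt0 {I J : Type*} [Fintype I] [Fintype J] [Nonempty I] [Nonempty J]
    (w : I → ℝ) (μ : I → J → ℝ) (S : J → ℝ) (S0 : ℝ) (γ : ℝ) (δ : J → ℝ)
    (hw : ∀ i, 0 < w i) (hwsum : ∑ i, w i = 1)
    (hS : ∀ j, 0 < S j) (hS0 : 0 < S0) (hsum : S0 + ∑ j, S j = 1)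
    (hγ : 0 ≤ γ)
    (s : (J → ℝ) → J → ℝ)
    (hs : ∀ d j, s d j =
      ∑ i, w i * Real.exp (d j + μ i j) / (1 + ∑ k, Real.exp (d k + μ i k)))
    (s0 : (J → ℝ) → ℝ)
    (hs0 : ∀ d, s0 d = 1 - ∑ k, s d k)
    (hfix : ∀ j, δ j = δ j + (Real.log (S j) - Real.log (s δ j))
        - γ * (Real.log S0 - Real.log (s0 δ))) :
    ∀ j, s δ j = S j :=
  stmt0_general w μ S S0 γ δ hw hwsum hS hS0 hsum hγ s hs s0 hs0 hfix
end

section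
/- With the notation of the static BLP model, if δ satisfies S_j = s_j(δ)·(S_0/s_0(δ))^γ for all j ∈ J, where γ ≥ 0, S_j > 0, S_0 > 0, and S_0 + Σ_j S_j = 1, then summing over j yields 1 − S_0 = (1 − s_0(δ))·(S_0/s_0(δ))^γ, and since t ↦ (1−t)/t^γ is strictly decreasing on (0,1) for γ ≥ 0, it follows that s_0(δ) = S_0 and hence s_j(δ) = S_j for all j. -/
open Real Finset

theorem stmt1 {I J : Type*} [Fintype I] [Fintype J] [Nonempty I] [Nonempty J]
    (w : I → ℝ) (μ : I → J → ℝ) (S : J → ℝ) (S0 : ℝ) (γ : ℝ) (δ : J → ℝ)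
    (hw : ∀ i, 0 < w i) (hwsum : ∑ i, w i = 1)
    (hS : ∀ j, 0 < S j) (hS0 : 0 < S0) (hsum : S0 + ∑ j, S j = 1)
    (hγ : 0 ≤ γ)
    (s : (J → ℝ) → J → ℝ)
    (hs : ∀ d j, s d j =
      ∑ i, w i * Real.exp (d j + μ i j) / (1 + ∑ k, Real.exp (d k + μ i k)))
    (s0 : (J → ℝ) → ℝ)
    (hs0 : ∀ d, s0 d = 1 - ∑ k, s d k)
    (hfix : ∀ j, S j = s δ j * (S0 / s0 δ) ^ γ) :
    (1 - S0 = (1 - s0 δ) * (S0 / s0 δ) ^ γ) ∧ s0 δ = S0 ∧ ∀ j, s δ j = S j := by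
  -- positivity of shares
  have hDpos : ∀ i, (0:ℝ) < 1 + ∑ k, Real.exp (δ k + μ i k) := by
    intro i
    positivity
  have hspos : ∀ j, 0 < s δ j := by
    intro j
    rw [hs]
    apply Finset.sum_pos _ Finset.univ_nonempty
    intro i _
    have := hw i
    have := hDpos i
    positivity
  have hsumlt : ∑ k, s δ k < 1 := by
    have hrw : ∑ k, s δ k
        = ∑ i, w i * (∑ k, Real.exp (δ k + μ i k)) / (1 + ∑ k, Real.exp (δ k + μ i k)) := by
      simp only [hs]
      rw [Finset.sum_comm]
      congr 1
      ext i
      rw [Finset.mul_sum, ← Finset.sum_div]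
    rw [hrw]
    have hlt : (∑ i, w i * (∑ k, Real.exp (δ k + μ i k)) / (1 + ∑ k, Real.exp (δ k + μ i k)))
        < ∑ i, w i := by
      apply Finset.sum_lt_sum_of_nonempty Finset.univ_nonempty
      intro i _
      rw [div_lt_iff₀ (hDpos i)]
      have hE : (0:ℝ) < ∑ k, Real.exp (δ k + μ i k) := by positivity
      nlinarith [hw i]
    rwa [hwsum] at hlt
  have hs0pos : 0 < s0 δ := by rw [hs0]; linarith
  have hs0lt : s0 δ < 1 := by
    rw [hs0]
    have : 0 < ∑ k, s δ k :=
      Finset.sum_pos (fun k _ => hspos k) Finset.univ_nonempty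
    linarith
  have hSsum : ∑ j, S j = 1 - S0 := by linarith
  have hS0lt : S0 < 1 := by
    have : 0 < ∑ j, S j := Finset.sum_pos (fun j _ => hS j) Finset.univ_nonempty
    linarith
  -- part 1
  have h1 : 1 - S0 = (1 - s0 δ) * (S0 / s0 δ) ^ γ := by
    have : ∑ j, S j = (∑ j, s δ j) * (S0 / s0 δ) ^ γ := by
      rw [Finset.sum_mul]
      exact Finset.sum_congr rfl fun j _ => hfix j
    rw [hSsum] at this
    have hsd : ∑ j, s δ j = 1 - s0 δ := by rw [hs0]; ring
    rw [hsd] at this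
    exact this
  -- part 2 : s0 δ = S0
  set t := s0 δ with ht
  have key : (1 - S0) * t ^ γ = (1 - t) * S0 ^ γ := by
    rw [h1, Real.div_rpow hS0.le hs0pos.le]
    field_simp
  have h2 : t = S0 := by
    rcases lt_trichotomy t S0 with h | h | h
    · exfalso
      have ht1 : t ^ γ ≤ S0 ^ γ := Real.rpow_le_rpow hs0pos.le h.le hγ
      have htp : (0:ℝ) < t ^ γ := Real.rpow_pos_of_pos hs0pos γ
      nlinarith
    · exact h
    · exfalso
      have ht1 : S0 ^ γ ≤ t ^ γ := Real.rpow_le_rpow hS0.le h.le hγ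
      have htp : (0:ℝ) < S0 ^ γ := Real.rpow_pos_of_pos hS0 γ
      nlinarith
  refine ⟨h1, h2, fun j => ?_⟩
  have := hfix j
  rw [h2, div_self hS0.ne', Real.one_rpow, mul_one] at this
  exact this.symm
end

section
/- Fixed points of the V-mapping yield the share equations: let γ ≥ 0, and suppose V ∈ ℝ^I satisfies V = Φ^{V,γ}(V) where Φ^{V,γ} = ι_{δ→V} ∘ ι^γ_{V→δ}, and set δ = ι^γ_{V→δ}(V). Then s_j(δ) = S_j for all j ∈ J, where s_j is the logit market share function. -/
open Real Finset

theorem stmt4 {I J : Type*} [Fintype I] [Fintype J] [Nonempty I] [Nonempty J]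
    (w : I → ℝ) (μ : I → J → ℝ) (S : J → ℝ) (S0 : ℝ) (γ : ℝ)
    (hw : ∀ i, 0 < w i) (hwsum : ∑ i, w i = 1)
    (hS : ∀ j, 0 < S j) (hS0 : 0 < S0) (hsum : S0 + ∑ j, S j = 1)
    (hγ : 0 ≤ γ)
    (ιδV : (J → ℝ) → I → ℝ) (ιVδ : (I → ℝ) → J → ℝ)
    (hιδV : ∀ δ i, ιδV δ i = Real.log (1 + ∑ j, Real.exp (δ j + μ i j)))
    (hιVδ : ∀ V j, ιVδ V j = Real.log (S j)
        - Real.log (∑ i, w i * Real.exp (μ i j - V i))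
        - γ * Real.log (S0 / ∑ i, w i * Real.exp (-V i)))
    (s : (J → ℝ) → J → ℝ)
    (hs : ∀ d j, s d j =
      ∑ i, w i * Real.exp (d j + μ i j) / (1 + ∑ k, Real.exp (d k + μ i k)))
    (V : I → ℝ) (hfix : ιδV (ιVδ V) = V)
    (δ : J → ℝ) (hδ : δ = ιVδ V) :
    ∀ j, s δ j = S j := by
  have hE : ∀ i, Real.exp (V i) = 1 + ∑ j, Real.exp (δ j + μ i j) := by
    intro i
    conv_lhs => rw [← hfix]
    rw [hιδV, ← hδ]
    apply Real.exp_log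
    positivity
  set A : J → ℝ := fun j => ∑ i, w i * Real.exp (μ i j - V i) with hAdef
  set B : ℝ := ∑ i, w i * Real.exp (-V i) with hBdef
  have hA : ∀ j, 0 < A j := fun j =>
    Finset.sum_pos (fun i _ => by have := hw i; positivity) Finset.univ_nonempty
  have hB : 0 < B :=
    Finset.sum_pos (fun i _ => by have := hw i; positivity) Finset.univ_nonempty
  set t : ℝ := Real.exp (γ * (Real.log B - Real.log S0)) with htdef
  have ht0 : 0 < t := Real.exp_pos _
  have hδj : ∀ j, Real.exp (δ j) = S j / A j * t := by
    intro j
    have h1 : δ j = (Real.log (S j) - Real.log (A j)) + γ * (Real.log B - Real.log S0) := by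
      rw [hδ, hιVδ, Real.log_div hS0.ne' hB.ne']
      ring
    rw [h1, Real.exp_add, Real.exp_sub, Real.exp_log (hS j), Real.exp_log (hA j)]
  have hsj : ∀ j, s δ j = S j * t := by
    intro j
    rw [hs]
    have heq : ∀ i ∈ Finset.univ, w i * Real.exp (δ j + μ i j) / (1 + ∑ k, Real.exp (δ k + μ i k))
        = (S j * t / A j) * (w i * Real.exp (μ i j - V i)) := by
      intro i _
      rw [← hE i, Real.exp_add, Real.exp_sub, hδj j]
      have h2 := (Real.exp_pos (V i)).ne'
      have h3 := (hA j).ne'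
      field_simp
    rw [Finset.sum_congr rfl heq, ← Finset.mul_sum]
    rw [div_mul_cancel₀ _ (hA j).ne']
  have hsum' : ∑ j, s δ j = 1 - B := by
    have h1 : ∀ i ∈ Finset.univ, ∑ j, w i * Real.exp (δ j + μ i j) / (1 + ∑ k, Real.exp (δ k + μ i k))
        = w i - w i * Real.exp (-V i) := by
      intro i _
      rw [← Finset.sum_div, ← Finset.mul_sum]
      have h2 : ∑ j, Real.exp (δ j + μ i j) = Real.exp (V i) - 1 := by rw [hE i]; ring
      rw [h2, Real.exp_neg, show (1:ℝ) + (Real.exp (V i) - 1) = Real.exp (V i) from by ring]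
      have h3 := (Real.exp_pos (V i)).ne'
      field_simp
    simp only [hs]
    rw [Finset.sum_comm, Finset.sum_congr rfl h1, Finset.sum_sub_distrib, hwsum, ← hBdef]
  have hSsum : ∑ j, S j = 1 - S0 := by linarith
  have h1S0 : 0 < 1 - S0 := by
    have := Finset.sum_pos (fun j (_ : j ∈ Finset.univ) => hS j) Finset.univ_nonempty
    linarith [hSsum]
  have hBeq : 1 - B = (1 - S0) * t := by
    rw [← hsum', Finset.sum_congr rfl (fun j _ => hsj j), ← Finset.sum_mul, hSsum]
  have hBS0 : B = S0 := by
    rcases lt_trichotomy B S0 with h | h | h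
    · exfalso
      have hlog : Real.log B ≤ Real.log S0 := Real.log_le_log hB h.le
      have ht1 : t ≤ 1 := by
        rw [htdef, Real.exp_le_one_iff]
        nlinarith
      nlinarith
    · exact h
    · exfalso
      have hlog : Real.log S0 ≤ Real.log B := Real.log_le_log hS0 h.le
      have ht1 : 1 ≤ t := by
        rw [htdef]
        have : (0:ℝ) ≤ γ * (Real.log B - Real.log S0) := by nlinarith
        calc (1:ℝ) = Real.exp 0 := Real.exp_zero.symm
          _ ≤ _ := Real.exp_le_exp.mpr this
      nlinarith
  have ht1 : t = 1 := by rw [htdef, hBS0, sub_self, mul_zero, Real.exp_zero]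
  intro j
  rw [hsj j, ht1, mul_one]
end

section
/- Group-sum derivative bound for the δ-mapping: for any subset J* ⊆ J and any δ, |Σ_{k∈J*} ∂Φ_j^{δ,γ}(δ)/∂δ_k| ≤ max{ sup_{i,J*,δ} s_{iJ*}(δ) − γ inf_{i,J*,δ} s_{iJ*}(δ), γ sup_{i,J*,δ} s_{iJ*}(δ) − inf_{i,J*,δ} s_{iJ*}(δ) } for γ ∈ [0,1], where s_{iJ*}(δ) = Σ_{k∈J*} s_{ik}(δ). In particular, since Σ_{k∈J*} ∂Φ_j^{δ,γ}/∂δ_k = Σ_i w_i s_{iJ*}(δ)(s_{ij}/s_j − γ s_{i0}/s_0), the bound follows from max_i s_{iJ*} − γ min_i s_{iJ*} as an upper bound and min_i s_{iJ*} − γ max_i s_{iJ*} as a lower bound. -/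
open Real Finset

theorem stmt7 {I J : Type*} [Fintype I] [Fintype J] [Nonempty I] [Nonempty J]
    (w : I → ℝ) (μ : I → J → ℝ) (γ : ℝ)
    (hw : ∀ i, 0 < w i) (hwsum : ∑ i, w i = 1)
    (hγ : γ ∈ Set.Icc (0:ℝ) 1)
    (si : (J → ℝ) → I → J → ℝ)
    (hsi : ∀ d i j, si d i j =
      Real.exp (d j + μ i j) / (1 + ∑ l, Real.exp (d l + μ i l)))
    (si0 : (J → ℝ) → I → ℝ)
    (hsi0 : ∀ d i, si0 d i = 1 / (1 + ∑ l, Real.exp (d l + μ i l)))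
    (s : (J → ℝ) → J → ℝ) (hs : ∀ d j, s d j = ∑ i, w i * si d i j)
    (s0 : (J → ℝ) → ℝ) (hs0 : ∀ d, s0 d = ∑ i, w i * si0 d i)
    (A B : ℝ)
    (hA : ∀ (i : I) (Js : Finset J) (d : J → ℝ), ∑ k ∈ Js, si d i k ≤ A)
    (hB : ∀ (i : I) (Js : Finset J) (d : J → ℝ), B ≤ ∑ k ∈ Js, si d i k) :
    ∀ (j : J) (Js : Finset J) (δ : J → ℝ),
      |∑ i, w i * (∑ k ∈ Js, si δ i k) * (si δ i j / s δ j - γ * (si0 δ i / s0 δ))|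
        ≤ max (A - γ * B) (γ * A - B) := by
  obtain ⟨hγ0, hγ1⟩ := hγ
  intro j Js δ
  have hsip : ∀ i k, 0 < si δ i k := by
    intro i k; rw [hsi]
    have : (0:ℝ) < 1 + ∑ l, Real.exp (δ l + μ i l) := by positivity
    positivity
  have hsi0p : ∀ i, 0 < si0 δ i := by
    intro i; rw [hsi0]
    have : (0:ℝ) < 1 + ∑ l, Real.exp (δ l + μ i l) := by positivity
    positivity
  have hsp : 0 < s δ j := by
    rw [hs]
    exact Finset.sum_pos (fun i _ => mul_pos (hw i) (hsip i j)) Finset.univ_nonempty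
  have hs0p : 0 < s0 δ := by
    rw [hs0]
    exact Finset.sum_pos (fun i _ => mul_pos (hw i) (hsi0p i)) Finset.univ_nonempty
  set a : I → ℝ := fun i => ∑ k ∈ Js, si δ i k with ha
  set p : I → ℝ := fun i => si δ i j / s δ j with hp
  set q : I → ℝ := fun i => si0 δ i / s0 δ with hq
  have hp1 : ∑ i, w i * p i = 1 := by
    have h : ∑ i, w i * p i = (∑ i, w i * si δ i j) / s δ j := by
      rw [Finset.sum_div]
      exact Finset.sum_congr rfl (fun i _ => (mul_div_assoc _ _ _).symm)
    rw [h, ← hs, div_self hsp.ne']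
  have hq1 : ∑ i, w i * q i = 1 := by
    have h : ∑ i, w i * q i = (∑ i, w i * si0 δ i) / s0 δ := by
      rw [Finset.sum_div]
      exact Finset.sum_congr rfl (fun i _ => (mul_div_assoc _ _ _).symm)
    rw [h, ← hs0, div_self hs0p.ne']
  have hpnn : ∀ i, 0 ≤ w i * p i := fun i =>
    mul_nonneg (hw i).le (div_nonneg (hsip i j).le hsp.le)
  have hqnn : ∀ i, 0 ≤ w i * q i := fun i =>
    mul_nonneg (hw i).le (div_nonneg (hsi0p i).le hs0p.le)
  have hsplit : ∑ i, w i * a i * (p i - γ * q i)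
      = ∑ i, w i * p i * a i - γ * ∑ i, w i * q i * a i := by
    rw [Finset.mul_sum, ← Finset.sum_sub_distrib]
    exact Finset.sum_congr rfl (fun i _ => by ring)
  have hAB1 : ∑ i, w i * p i * a i ≤ A := by
    calc ∑ i, w i * p i * a i ≤ ∑ i, w i * p i * A :=
          Finset.sum_le_sum (fun i _ => mul_le_mul_of_nonneg_left (hA i Js δ) (hpnn i))
      _ = A := by rw [← Finset.sum_mul, hp1, one_mul]
  have hAB2 : B ≤ ∑ i, w i * p i * a i := by
    calc B = ∑ i, w i * p i * B := by rw [← Finset.sum_mul, hp1, one_mul]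
      _ ≤ ∑ i, w i * p i * a i :=
          Finset.sum_le_sum (fun i _ => mul_le_mul_of_nonneg_left (hB i Js δ) (hpnn i))
  have hAB3 : ∑ i, w i * q i * a i ≤ A := by
    calc ∑ i, w i * q i * a i ≤ ∑ i, w i * q i * A :=
          Finset.sum_le_sum (fun i _ => mul_le_mul_of_nonneg_left (hA i Js δ) (hqnn i))
      _ = A := by rw [← Finset.sum_mul, hq1, one_mul]
  have hAB4 : B ≤ ∑ i, w i * q i * a i := by
    calc B = ∑ i, w i * q i * B := by rw [← Finset.sum_mul, hq1, one_mul]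
      _ ≤ ∑ i, w i * q i * a i :=
          Finset.sum_le_sum (fun i _ => mul_le_mul_of_nonneg_left (hB i Js δ) (hqnn i))
  have hub : ∑ i, w i * a i * (p i - γ * q i) ≤ A - γ * B := by
    rw [hsplit]
    have := mul_le_mul_of_nonneg_left hAB4 hγ0
    linarith
  have hlb : B - γ * A ≤ ∑ i, w i * a i * (p i - γ * q i) := by
    rw [hsplit]
    have := mul_le_mul_of_nonneg_left hAB3 hγ0
    linarith
  have h1 : A - γ * B ≤ max (A - γ * B) (γ * A - B) := le_max_left _ _
  have h2 : γ * A - B ≤ max (A - γ * B) (γ * A - B) := le_max_right _ _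
  exact abs_le.mpr ⟨by linarith, by linarith⟩
end

section
/- Directional mean-value bound (Lemma on sup-norm differences): let f : ℝ^K → ℝ^K be continuously differentiable. Then for all x, x* ∈ ℝ^K, ‖f(x) − f(x*)‖_∞ ≤ C · (‖max{x,x*} − x‖_∞ + ‖max{x,x*} − x*‖_∞) ≤ 2C‖x − x*‖_∞, where C = sup over subsets I ⊆ {1,…,K} and points y of ‖Σ_{i∈I} ∂f(y)/∂x_i‖_∞, and max{x,x*} denotes the componentwise maximum. -/
open Finset

/-!
For `y ≤ z`, the derivative of `f` along the segment from `y` to `z` is `Df(·) (z - y)` with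
`z - y ≥ 0`. A nonnegative `v` lies in the cube `[0, ‖v‖]^K`, the convex hull of the vertices
`‖v‖ • 𝟙_I`, and the convex function `w ↦ ‖Df(y) w‖` is maximised at a vertex; hence
`‖Df(y) v‖ ≤ C ‖v‖`, and the mean value theorem gives `‖f z - f y‖ ≤ C ‖z - y‖`. Apply this on the
segments from `x` and from `x*` up to `max{x, x*}`.
-/

section PositiveDirections

variable {ι F : Type*} [Fintype ι] [DecidableEq ι] [SeminormedAddCommGroup F] [NormedSpace ℝ F]

theorem exists_eq_smul_sum_single_of_mem_pi_pair {r : ℝ} {w : ι → ℝ}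
    (hw : w ∈ Set.univ.pi fun _ => ({0, r} : Set ℝ)) :
    ∃ s : Finset ι, w = r • ∑ i ∈ s, Pi.single i 1 := by
  refine ⟨univ.filter fun i => w i = r, funext fun i => ?_⟩
  obtain h | h : w i = 0 ∨ w i = r := hw i trivial <;> simp [Finset.sum_apply, h]

theorem LinearMap.norm_apply_le_of_nonneg (L : (ι → ℝ) →ₗ[ℝ] F) {C : ℝ}
    (hL : ∀ s : Finset ι, ‖∑ i ∈ s, L (Pi.single i 1)‖ ≤ C) {v : ι → ℝ} (hv : 0 ≤ v) :
    ‖L v‖ ≤ C * ‖v‖ := by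
  set r := ‖v‖
  have hcube : v ∈ convexHull ℝ (Set.univ.pi fun _ => ({0, r} : Set ℝ)) := by
    rw [convexHull_pi]
    intro i _
    rw [convexHull_pair, segment_eq_Icc (norm_nonneg v)]
    exact ⟨hv i, (Real.le_norm_self _).trans (norm_le_pi_norm v i)⟩
  have hconvex : ConvexOn ℝ Set.univ fun w => ‖L w‖ :=
    (convexOn_norm convex_univ).comp_linearMap L
  obtain ⟨w, hw, hvw⟩ := hconvex.exists_ge_of_mem_convexHull (Set.subset_univ _) hcube
  obtain ⟨s, rfl⟩ := exists_eq_smul_sum_single_of_mem_pi_pair hw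
  calc ‖L v‖ ≤ ‖L (r • ∑ i ∈ s, Pi.single i 1)‖ := hvw
    _ = r * ‖∑ i ∈ s, L (Pi.single i 1)‖ := by
      rw [map_smul, map_sum, norm_smul, Real.norm_of_nonneg (norm_nonneg v)]
    _ ≤ C * r := by rw [mul_comm]; exact mul_le_mul_of_nonneg_right (hL s) (norm_nonneg v)

end PositiveDirections

theorem norm_image_sub_le_of_le {E F : Type*} [NormedAddCommGroup E] [NormedSpace ℝ E]
    [PartialOrder E] [IsOrderedAddMonoid E] [NormedAddCommGroup F] [NormedSpace ℝ F]
    {f : E → F} (hf : Differentiable ℝ f) {C : ℝ}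
    (hC : ∀ y v, 0 ≤ v → ‖fderiv ℝ f y v‖ ≤ C * ‖v‖) {x z : E} (hxz : x ≤ z) :
    ‖f z - f x‖ ≤ C * ‖z - x‖ := by
  set g := (AffineMap.lineMap x z : ℝ → E)
  have hderiv : ∀ t ∈ Set.Icc (0 : ℝ) 1,
      HasDerivWithinAt (f ∘ g) (fderiv ℝ f (g t) (z - x)) (Set.Icc 0 1) t := fun t _ =>
    (hf (g t)).hasFDerivAt.comp_hasDerivWithinAt t AffineMap.hasDerivWithinAt_lineMap
  simpa [g] using norm_image_sub_le_of_norm_deriv_le_segment_01' hderiv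
    fun t _ => hC (g t) (z - x) (sub_nonneg.mpr hxz)

theorem norm_sup_sub_le_norm_sub {ι : Type*} [Fintype ι] (x y : ι → ℝ) : ‖x ⊔ y - x‖ ≤ ‖x - y‖ :=
  pi_norm_le_iff_of_nonneg (norm_nonneg _) |>.mpr fun i =>
    calc ‖(x ⊔ y - x) i‖ = ‖y i ⊔ x i - x i ⊔ x i‖ := by simp [sup_comm]
      _ ≤ ‖y i - x i‖ := norm_sup_sub_sup_le_norm _ _ _
      _ = ‖(x - y) i‖ := by simp [norm_sub_rev]
      _ ≤ ‖x - y‖ := norm_le_pi_norm _ i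

theorem stmt9 {K : ℕ} (f : (Fin K → ℝ) → Fin K → ℝ) (C : ℝ)
    (hf : ContDiff ℝ 1 f)
    (hC : ∀ (s : Finset (Fin K)) (y : Fin K → ℝ),
      ‖∑ i ∈ s, fderiv ℝ f y (Pi.single i 1)‖ ≤ C) :
    ∀ x xs : Fin K → ℝ,
      ‖f x - f xs‖ ≤ C * (‖(fun i => max (x i) (xs i)) - x‖
          + ‖(fun i => max (x i) (xs i)) - xs‖) ∧
      C * (‖(fun i => max (x i) (xs i)) - x‖ + ‖(fun i => max (x i) (xs i)) - xs‖)
          ≤ 2 * C * ‖x - xs‖ := by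
  intro x xs
  have hC₀ : 0 ≤ C := by simpa using hC ∅ 0
  have hlip : ∀ y z : Fin K → ℝ, y ≤ z → ‖f z - f y‖ ≤ C * ‖z - y‖ := fun y z =>
    norm_image_sub_le_of_le (hf.differentiable one_ne_zero)
      fun y _ hv => (fderiv ℝ f y).toLinearMap.norm_apply_le_of_nonneg (hC · y) hv
  change ‖f x - f xs‖ ≤ C * (‖x ⊔ xs - x‖ + ‖x ⊔ xs - xs‖) ∧
    C * (‖x ⊔ xs - x‖ + ‖x ⊔ xs - xs‖) ≤ 2 * C * ‖x - xs‖
  constructor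
  · calc ‖f x - f xs‖ = ‖(f (x ⊔ xs) - f xs) - (f (x ⊔ xs) - f x)‖ := by abel_nf
      _ ≤ ‖f (x ⊔ xs) - f x‖ + ‖f (x ⊔ xs) - f xs‖ := by rw [add_comm]; exact norm_sub_le _ _
      _ ≤ C * (‖x ⊔ xs - x‖ + ‖x ⊔ xs - xs‖) := by
        rw [mul_add]; exact add_le_add (hlip _ _ le_sup_left) (hlip _ _ le_sup_right)
  · have h₁ := norm_sup_sub_le_norm_sub x xs
    have h₂ : ‖x ⊔ xs - xs‖ ≤ ‖x - xs‖ := by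
      simpa [sup_comm, norm_sub_rev] using norm_sup_sub_le_norm_sub xs x
    calc C * (‖x ⊔ xs - x‖ + ‖x ⊔ xs - xs‖) ≤ C * (‖x - xs‖ + ‖x - xs‖) := by gcongr
      _ = 2 * C * ‖x - xs‖ := by ring
end

section
/- Fixed points of the nested-logit mapping give share matching: in the random coefficient nested logit model with nest parameter ρ ∈ [0,1), define Φ_j^{δ,γ}(δ) = δ_j + (1−ρ)(log S_j − log s_j(δ)) + γρ(log S_g − log s_g(δ)) − γ(log S_0 − log s_0(δ)) for j in nest g. If γ ≥ 0 and δ = Φ^{δ,γ}(δ), then s_j(δ) = S_j for all products j. -/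
/-!
Write `a_j = log S_j - log s_j` and `b_g = log S_g - log s_g`. The fixed-point equation says that
`(1 - ρ) a_j + γ ρ b_g = γ (log S_0 - log s_0)` for `j` in nest `g`, so `a_j` depends on the nest
only; summing `S_j = s_j e^{a_j}` over the nest gives `b_g = a_j`, hence every `a_j` equals
`c (log S_0 - log s_0)` with `c = γ / (1 - ρ + ρ γ) ≥ 0`. Summing `S_j = s_j (S_0 / s_0)^c` over
all products gives `(1 - S_0) / S_0^c = (1 - s_0) / s_0^c`, and `t ↦ (1 - t) / t^c` is strictly
decreasing on `(0, 1]`, so `S_0 = s_0` and then `S_j = s_j`.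
-/

open Real Finset

theorem strictAntiOn_one_sub_div_rpow {c : ℝ} (hc : 0 ≤ c) :
    StrictAntiOn (fun t : ℝ => (1 - t) / t ^ c) (Set.Ioc 0 1) := by
  intro a ⟨ha, _⟩ b ⟨_, hb1⟩ hab
  have hac : 0 < a ^ c := rpow_pos_of_pos ha c
  calc (1 - b) / b ^ c ≤ (1 - b) / a ^ c :=
        div_le_div_of_nonneg_left (by linarith) hac (rpow_le_rpow ha.le hab.le hc)
    _ < (1 - a) / a ^ c := div_lt_div_of_pos_right (by linarith) hac

theorem eq_of_one_sub_eq_mul_exp {x y c : ℝ} (hx : 0 < x) (hx1 : x ≤ 1) (hy : 0 < y) (hy1 : y ≤ 1)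
    (hc : 0 ≤ c) (h : 1 - x = (1 - y) * exp (c * (log x - log y))) : x = y := by
  have hexp : exp (c * (log x - log y)) = x ^ c / y ^ c := by
    rw [rpow_def_of_pos hx, rpow_def_of_pos hy, ← exp_sub]; ring_nf
  refine (strictAntiOn_one_sub_div_rpow hc).injOn ⟨hx, hx1⟩ ⟨hy, hy1⟩ ?_
  have hyc : 0 < y ^ c := rpow_pos_of_pos hy c
  have hxc : 0 < x ^ c := rpow_pos_of_pos hx c
  show (1 - x) / x ^ c = (1 - y) / y ^ c
  rw [h, hexp, div_eq_div_iff hxc.ne' hyc.ne']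
  field_simp

theorem sum_sum_mul_lt_one {I J : Type*} [Fintype I] [Fintype J] [Nonempty I] {w : I → ℝ}
    (hw : ∀ i, 0 < w i) (hw_sum : ∑ i, w i = 1) {p : I → J → ℝ} (hp : ∀ i, ∑ j, p i j < 1) :
    ∑ j, ∑ i, w i * p i j < 1 := by
  rw [sum_comm, ← hw_sum]
  refine sum_lt_sum_of_nonempty univ_nonempty fun i _ => ?_
  rw [← mul_sum]
  exact mul_lt_of_lt_one_right (hw i) (hp i)

section Nests

variable {J G : Type*} [Fintype J] [DecidableEq G] (nest : J → G)

theorem log_sum_nest_sub_log_sum_nest {s S : J → ℝ} (hs : ∀ j, 0 < s j) (hS : ∀ j, 0 < S j)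
    {A : G → ℝ} (h : ∀ j, log (S j) - log (s j) = A (nest j)) (j : J) :
    log (∑ k ∈ univ.filter (fun k => nest k = nest j), S k)
      - log (∑ k ∈ univ.filter (fun k => nest k = nest j), s k) = A (nest j) := by
  have hsum : ∑ k ∈ univ.filter (fun k => nest k = nest j), S k
      = (∑ k ∈ univ.filter (fun k => nest k = nest j), s k) * exp (A (nest j)) := by
    rw [sum_mul]
    refine sum_congr rfl fun k hk => ?_
    rw [(mem_filter.mp hk).2.symm, ← h k, exp_sub, exp_log (hS k), exp_log (hs k)]
    field_simp [(hs k).ne']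
  have hpos : 0 < ∑ k ∈ univ.filter (fun k => nest k = nest j), s k :=
    sum_pos (fun k _ => hs k) ⟨j, by simp⟩
  rw [hsum, log_mul hpos.ne' (exp_ne_zero _), log_exp]
  ring

theorem sum_nestedLogit_lt_one [Fintype G] (hnest : ∀ g, ∃ j, nest j = g) {σ : ℝ} (hσ : σ ≠ 0)
    (v : J → ℝ) {IV : G → ℝ}
    (hIV : ∀ g, IV g = σ * log (∑ j ∈ univ.filter (fun j => nest j = g), exp (v j))) :
    ∑ j, exp (v j) / exp (IV (nest j) / σ) * (exp (IV (nest j)) / (1 + ∑ g, exp (IV g))) < 1 := by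
  have hwithin : ∀ g, ∑ j ∈ univ.filter (fun j => nest j = g), exp (v j) / exp (IV g / σ) = 1 := by
    intro g
    obtain ⟨j, hj⟩ := hnest g
    have hpos : 0 < ∑ j ∈ univ.filter (fun j => nest j = g), exp (v j) :=
      sum_pos (fun _ _ => exp_pos _) ⟨j, by simp [hj]⟩
    rw [← sum_div, hIV, mul_div_cancel_left₀ _ hσ, exp_log hpos, div_self hpos.ne']
  have hD : 0 ≤ ∑ g, exp (IV g) := sum_nonneg fun _ _ => (exp_pos _).le
  calc _ = ∑ g, ∑ j ∈ univ.filter (fun j => nest j = g),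
          exp (v j) / exp (IV g / σ) * (exp (IV g) / (1 + ∑ g, exp (IV g))) := by
        rw [← sum_fiberwise univ nest]
        exact sum_congr rfl fun g _ => sum_congr rfl fun j hj => by rw [(mem_filter.mp hj).2]
    _ = (∑ g, exp (IV g)) / (1 + ∑ g, exp (IV g)) := by
        simp only [← sum_mul, hwithin, one_mul, sum_div]
    _ < 1 := (div_lt_one (by linarith)).mpr (by linarith)

theorem eq_of_nestedLogit_fixedPoint {ρ γ : ℝ} (hρ0 : 0 ≤ ρ) (hρ1 : ρ < 1) (hγ : 0 ≤ γ)
    {s S : J → ℝ} {s0 S0 : ℝ} (hs : ∀ j, 0 < s j) (hS : ∀ j, 0 < S j) (hs0 : 0 < s0)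
    (hS0 : 0 < S0) (hs_sum : s0 + ∑ j, s j = 1) (hS_sum : S0 + ∑ j, S j = 1)
    (h : ∀ j, (1 - ρ) * (log (S j) - log (s j))
      + γ * ρ * (log (∑ k ∈ univ.filter (fun k => nest k = nest j), S k)
        - log (∑ k ∈ univ.filter (fun k => nest k = nest j), s k))
      = γ * (log S0 - log s0)) :
    ∀ j, s j = S j := by
  set L := log S0 - log s0
  set c := γ / (1 - ρ + γ * ρ)
  have hρ : 0 < 1 - ρ := by linarith
  have hden : 0 < 1 - ρ + γ * ρ := by nlinarith
  have hc : c * (1 - ρ + γ * ρ) = γ := div_mul_cancel₀ γ hden.ne'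
  set b : G → ℝ := fun g => log (∑ k ∈ univ.filter (fun k => nest k = g), S k)
    - log (∑ k ∈ univ.filter (fun k => nest k = g), s k)
  have hb : ∀ j, b (nest j) = c * L := by
    intro j
    have hbj := log_sum_nest_sub_log_sum_nest nest hs hS
      (A := fun g => (γ * L - γ * ρ * b g) / (1 - ρ))
      (fun k => by rw [eq_div_iff hρ.ne']; linarith [h k]) j
    rw [eq_div_iff hρ.ne'] at hbj
    apply mul_right_cancel₀ hden.ne'
    linear_combination hbj - L * hc
  have hratio : ∀ j, S j = s j * exp (c * L) := by
    intro j
    have haj : log (S j) - log (s j) = c * L := by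
      apply mul_left_cancel₀ hρ.ne'
      linear_combination h j - γ * ρ * hb j - L * hc
    rw [← haj, exp_sub, exp_log (hS j), exp_log (hs j)]
    field_simp [(hs j).ne']
  have hS0_eq : S0 = s0 := by
    have hS0_le : S0 ≤ 1 := by linarith [sum_nonneg fun j (_ : j ∈ univ) => (hS j).le]
    have hs0_le : s0 ≤ 1 := by linarith [sum_nonneg fun j (_ : j ∈ univ) => (hs j).le]
    refine eq_of_one_sub_eq_mul_exp hS0 hS0_le hs0 hs0_le (div_nonneg hγ hden.le) ?_
    calc 1 - S0 = ∑ j, S j := by linarith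
      _ = (∑ j, s j) * exp (c * L) := by rw [sum_mul]; exact sum_congr rfl fun j _ => hratio j
      _ = (1 - s0) * exp (c * L) := by rw [← hs_sum]; ring
  have hL : L = 0 := by simp only [L, hS0_eq, sub_self]
  intro j
  rw [hratio j, hL, mul_zero, exp_zero, mul_one]

end Nests

theorem stmt17_general {I J G : Type*} [Fintype I] [Fintype J] [Fintype G]
    [Nonempty I] [DecidableEq G]
    (nest : J → G) (hnest : ∀ g, ∃ j, nest j = g)
    (ρ : ℝ) (hρ : ρ ∈ Set.Ico (0:ℝ) 1)
    (w : I → ℝ) (hw : ∀ i, 0 < w i) (hwsum : ∑ i, w i = 1)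
    (μ : I → J → ℝ) (S : J → ℝ) (hS : ∀ j, 0 < S j)
    (S0 : ℝ) (hS0 : 0 < S0) (hsum : S0 + ∑ j, S j = 1)
    (γ : ℝ) (hγ : 0 ≤ γ)
    (IV : (J → ℝ) → I → G → ℝ)
    (hIV : ∀ δ i g, IV δ i g = (1 - ρ) *
      Real.log (∑ j ∈ Finset.univ.filter (fun j => nest j = g),
        Real.exp ((δ j + μ i j) / (1 - ρ))))
    (si : (J → ℝ) → I → J → ℝ)
    (hsi : ∀ δ i j, si δ i j =
      Real.exp ((δ j + μ i j) / (1 - ρ)) / Real.exp (IV δ i (nest j) / (1 - ρ))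
        * (Real.exp (IV δ i (nest j)) / (1 + ∑ g, Real.exp (IV δ i g))))
    (s : (J → ℝ) → J → ℝ) (hs : ∀ δ j, s δ j = ∑ i, w i * si δ i j)
    (sg : (J → ℝ) → G → ℝ)
    (hsg : ∀ δ g, sg δ g = ∑ j ∈ Finset.univ.filter (fun j => nest j = g), s δ j)
    (s0 : (J → ℝ) → ℝ) (hs0 : ∀ δ, s0 δ = 1 - ∑ g, sg δ g)
    (Sg : G → ℝ)
    (hSg : ∀ g, Sg g = ∑ j ∈ Finset.univ.filter (fun j => nest j = g), S j)
    (δ : J → ℝ)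
    (hfix : ∀ j, δ j = δ j + (1 - ρ) * (Real.log (S j) - Real.log (s δ j))
        + γ * ρ * (Real.log (Sg (nest j)) - Real.log (sg δ (nest j)))
        - γ * (Real.log S0 - Real.log (s0 δ))) :
    ∀ j, s δ j = S j := by
  obtain ⟨hρ0, hρ1⟩ := hρ
  have hsi_pos : ∀ i j, 0 < si δ i j := fun i j => by rw [hsi]; positivity
  have hs_pos : ∀ j, 0 < s δ j := fun j => by
    rw [hs]; exact sum_pos (fun i _ => mul_pos (hw i) (hsi_pos i j)) univ_nonempty
  have hs_sum : s0 δ + ∑ j, s δ j = 1 := by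
    rw [hs0, ← sum_fiberwise univ nest]; simp only [hsg]; ring
  have hs_lt : ∑ j, s δ j < 1 := by
    simp only [hs]
    refine sum_sum_mul_lt_one hw hwsum fun i => ?_
    simp only [hsi]
    exact sum_nestedLogit_lt_one nest hnest (by linarith) _ (hIV δ i)
  refine eq_of_nestedLogit_fixedPoint nest hρ0 hρ1 hγ hs_pos hS (by linarith) hS0 hs_sum hsum
    fun j => ?_
  have := hfix j
  rw [hSg, hsg] at this
  linarith

theorem stmt17 {I J G : Type*} [Fintype I] [Fintype J] [Fintype G]
    [Nonempty I] [Nonempty J] [DecidableEq G]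
    (nest : J → G) (hnest : ∀ g, ∃ j, nest j = g)
    (ρ : ℝ) (hρ : ρ ∈ Set.Ico (0:ℝ) 1)
    (w : I → ℝ) (hw : ∀ i, 0 < w i) (hwsum : ∑ i, w i = 1)
    (μ : I → J → ℝ) (S : J → ℝ) (hS : ∀ j, 0 < S j)
    (S0 : ℝ) (hS0 : 0 < S0) (hsum : S0 + ∑ j, S j = 1)
    (γ : ℝ) (hγ : 0 ≤ γ)
    (IV : (J → ℝ) → I → G → ℝ)
    (hIV : ∀ δ i g, IV δ i g = (1 - ρ) *
      Real.log (∑ j ∈ Finset.univ.filter (fun j => nest j = g),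
        Real.exp ((δ j + μ i j) / (1 - ρ))))
    (si : (J → ℝ) → I → J → ℝ)
    (hsi : ∀ δ i j, si δ i j =
      Real.exp ((δ j + μ i j) / (1 - ρ)) / Real.exp (IV δ i (nest j) / (1 - ρ))
        * (Real.exp (IV δ i (nest j)) / (1 + ∑ g, Real.exp (IV δ i g))))
    (s : (J → ℝ) → J → ℝ) (hs : ∀ δ j, s δ j = ∑ i, w i * si δ i j)
    (sg : (J → ℝ) → G → ℝ)
    (hsg : ∀ δ g, sg δ g = ∑ j ∈ Finset.univ.filter (fun j => nest j = g), s δ j)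
    (s0 : (J → ℝ) → ℝ) (hs0 : ∀ δ, s0 δ = 1 - ∑ g, sg δ g)
    (Sg : G → ℝ)
    (hSg : ∀ g, Sg g = ∑ j ∈ Finset.univ.filter (fun j => nest j = g), S j)
    (δ : J → ℝ)
    (hfix : ∀ j, δ j = δ j + (1 - ρ) * (Real.log (S j) - Real.log (s δ j))
        + γ * ρ * (Real.log (Sg (nest j)) - Real.log (sg δ (nest j)))
        - γ * (Real.log S0 - Real.log (s0 δ))) :
    ∀ j, s δ j = S j :=
  stmt17_general nest hnest ρ hρ w hw hwsum μ S hS S0 hS0 hsum γ hγ IV hIV si hsi s hs sg hsg s0 hs0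
    Sg hSg δ hfix
end

section
/- Sum of partial derivatives of the V-mapping at γ = 0 equals one minus the outside probability: for the mapping Φ_{i₂}^{V,0}(V) = log(1 + Σ_j S_j exp(μ_{i₂j})/(Σ_i w_i exp(μ_{ij}−V_i))), one has Σ_{i₁∈I} |∂Φ_{i₂}^{V,0}(V)/∂V_{i₁}| = Σ_{i₁∈I} ∂Φ_{i₂}^{V,0}(V)/∂V_{i₁} = T_{i₂}(V)/(1 + T_{i₂}(V)) < 1, where T_{i₂}(V) = Σ_j S_j exp(μ_{i₂j})/(Σ_i w_i exp(μ_{ij}−V_i)); in particular the mapping Φ^{V,0} is nonexpansive in the sup norm on any set where sup_{i₂,V} T_{i₂}(V)/(1+T_{i₂}(V)) < 1. -/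
/-!
Write `T V = ∑ⱼ aⱼ / Zⱼ(V)` with `aⱼ = Sⱼ e^{μ_{i₂j}} ≥ 0` and the partition function
`Zⱼ(V) = ∑ᵢ wᵢ e^{μᵢⱼ - Vᵢ}`. Two structural facts about `T` carry the whole argument: it is
monotone in `V`, and shifting every coordinate by `c` multiplies it by `e^c`, because
`Zⱼ(V + c) = e^{-c} Zⱼ(V)`. Monotonicity makes every partial derivative of `Φ = log (1 + T)`
nonnegative. The sum of the partials is the derivative along the diagonal direction `1`, i.e. the
derivative at `0` of `t ↦ log (1 + e^t T(V))`, which is `T/(1+T)`. Finally, monotonicity together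
with `Φ(V + c) ≤ Φ(V) + c` for `c ≥ 0` (Blackwell's conditions with discount factor `1`) makes `Φ`
1-Lipschitz for the sup norm, without any use of derivatives.
-/

open Real Finset

section DirectionalDerivative

variable {E : Type*} [NormedAddCommGroup E] [NormedSpace ℝ E]

theorem HasFDerivAt.hasDerivAt_comp_add_smul {f : E → ℝ} {f' : E →L[ℝ] ℝ} {x : E}
    (hf : HasFDerivAt f f' x) (v : E) : HasDerivAt (fun t : ℝ => f (x + t • v)) (f' v) 0 := by
  have hline : HasDerivAt (fun t : ℝ => x + t • v) v 0 := by
    simpa using ((hasDerivAt_id (0 : ℝ)).smul_const v).const_add x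
  exact hf.comp_hasDerivAt_of_eq 0 hline (by simp)

theorem Monotone.fderiv_apply_nonneg [PartialOrder E] [IsOrderedAddMonoid E] [SMulPosMono ℝ E]
    {f : E → ℝ} (hf : Monotone f) (x : E) {v : E} (hv : 0 ≤ v) : 0 ≤ fderiv ℝ f x v := by
  by_cases hd : DifferentiableAt ℝ f x
  · have hmono : Monotone fun t : ℝ => f (x + t • v) := fun s t hst =>
      hf (add_le_add_right (smul_le_smul_of_nonneg_right hst hv) x)
    rw [← (hd.hasFDerivAt.hasDerivAt_comp_add_smul v).deriv]
    exact hmono.deriv_nonneg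
  · simp [fderiv_zero_of_not_differentiableAt hd]

end DirectionalDerivative

theorem monotone_log_one_add {α : Type*} [Preorder α] {T : α → ℝ} (hT0 : ∀ x, 0 ≤ T x)
    (hT : Monotone T) : Monotone fun x => log (1 + T x) := fun x y h =>
  log_le_log (by linarith [hT0 x]) (by linarith [hT h])

section DiagonalShift

variable {I : Type*}

theorem sum_apply_single_one [Fintype I] [DecidableEq I] (L : (I → ℝ) →L[ℝ] ℝ) :
    ∑ i, L (Pi.single i 1) = L 1 := by
  rw [← map_sum]
  simpa using congrArg L (Finset.univ_sum_single (1 : I → ℝ))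

theorem Monotone.lipschitzWith_one_of_add_smul_one_le [Fintype I] {f : (I → ℝ) → ℝ}
    (hf : Monotone f) (hshift : ∀ V (c : ℝ), 0 ≤ c → f (V + c • 1) ≤ f V + c) :
    LipschitzWith 1 f := by
  refine LipschitzWith.of_le_add fun V₁ V₂ => (hf fun i => ?_).trans (hshift V₂ _ dist_nonneg)
  have := (le_abs_self _).trans (norm_le_pi_norm (V₁ - V₂) i)
  simp only [Pi.sub_apply] at this
  simp only [Pi.add_apply, Pi.smul_apply, Pi.one_apply, smul_eq_mul, mul_one, dist_eq_norm]
  linarith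

variable {T : (I → ℝ) → ℝ} {V : I → ℝ}

theorem log_one_add_add_smul_one_le {c : ℝ} (hT0 : 0 ≤ T V) (hshift : T (V + c • 1) = exp c * T V)
    (hc : 0 ≤ c) : log (1 + T (V + c • 1)) ≤ log (1 + T V) + c := by
  have hexp : 1 ≤ exp c := one_le_exp hc
  calc log (1 + T (V + c • 1)) ≤ log (exp c * (1 + T V)) := by
        rw [hshift]; exact log_le_log (by positivity) (by nlinarith)
    _ = log (1 + T V) + c := by rw [log_mul (exp_pos c).ne' (by linarith), log_exp, add_comm]

theorem sum_fderiv_log_one_add_apply_single [Fintype I] [DecidableEq I] (hT0 : 0 ≤ T V)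
    (hshift : ∀ c : ℝ, T (V + c • 1) = exp c * T V) (hd : DifferentiableAt ℝ T V) :
    ∑ i, fderiv ℝ (fun V => log (1 + T V)) V (Pi.single i 1) = T V / (1 + T V) := by
  have hpos : 0 < 1 + T V := by linarith
  rw [sum_apply_single_one]
  have hf : DifferentiableAt ℝ (fun V => log (1 + T V)) V := (hd.const_add 1).log hpos.ne'
  have hline : HasDerivAt (fun t : ℝ => log (1 + exp t * T V)) (T V / (1 + T V)) 0 := by
    simpa using (((hasDerivAt_exp 0).mul_const (T V)).const_add 1).log (by simpa using hpos.ne')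
  rw [← (hf.hasFDerivAt.hasDerivAt_comp_add_smul 1).deriv]
  simp only [hshift]
  exact hline.deriv

end DiagonalShift

section PartitionFunction

variable {I J : Type*} [Fintype I] (w : I → ℝ) (μ : I → J → ℝ)

noncomputable def partitionFn (V : I → ℝ) (j : J) : ℝ := ∑ i, w i * exp (μ i j - V i)

variable {w}

theorem partitionFn_pos [Nonempty I] (hw : ∀ i, 0 < w i) (V : I → ℝ) (j : J) :
    0 < partitionFn w μ V j :=
  sum_pos (fun i _ => mul_pos (hw i) (exp_pos _)) univ_nonempty

theorem partitionFn_add_smul_one (V : I → ℝ) (c : ℝ) (j : J) :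
    partitionFn w μ (V + c • 1) j = exp (-c) * partitionFn w μ V j := by
  simp only [partitionFn, mul_sum]
  refine sum_congr rfl fun i _ => ?_
  rw [Pi.add_apply, Pi.smul_apply, Pi.one_apply, smul_eq_mul, mul_one, sub_add_eq_sub_sub,
    sub_eq_add_neg _ c, exp_add]
  ring

theorem antitone_partitionFn (hw : ∀ i, 0 ≤ w i) (j : J) :
    Antitone fun V => partitionFn w μ V j := fun V V' h =>
  sum_le_sum fun i _ => mul_le_mul_of_nonneg_left (exp_le_exp.2 (by linarith [h i])) (hw i)

theorem differentiable_partitionFn (j : J) : Differentiable ℝ fun V => partitionFn w μ V j := by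
  unfold partitionFn; fun_prop

variable [Fintype J] {a : J → ℝ}

theorem sum_div_partitionFn_add_smul_one (V : I → ℝ) (c : ℝ) :
    ∑ j, a j / partitionFn w μ (V + c • 1) j = exp c * ∑ j, a j / partitionFn w μ V j := by
  simp only [partitionFn_add_smul_one, mul_sum, exp_neg]
  refine sum_congr rfl fun j _ => ?_
  field_simp

variable [Nonempty I]

theorem sum_div_partitionFn_nonneg (hw : ∀ i, 0 < w i) (ha : ∀ j, 0 ≤ a j) (V : I → ℝ) :
    0 ≤ ∑ j, a j / partitionFn w μ V j :=
  sum_nonneg fun j _ => div_nonneg (ha j) (partitionFn_pos μ hw V j).le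

theorem monotone_sum_div_partitionFn (hw : ∀ i, 0 < w i) (ha : ∀ j, 0 ≤ a j) :
    Monotone fun V => ∑ j, a j / partitionFn w μ V j := fun _ V' h =>
  sum_le_sum fun j _ => div_le_div_of_nonneg_left (ha j) (partitionFn_pos μ hw V' j)
    (antitone_partitionFn μ (fun i => (hw i).le) j h)

theorem differentiable_sum_div_partitionFn (hw : ∀ i, 0 < w i) :
    Differentiable ℝ fun V => ∑ j, a j / partitionFn w μ V j := by
  simp only [div_eq_mul_inv]
  exact Differentiable.fun_sum fun j _ => ((differentiable_partitionFn μ j).inv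
    fun V => (partitionFn_pos μ hw V j).ne').const_mul (a j)

end PartitionFunction

theorem stmt19_general {I J : Type*} [Fintype I] [Fintype J] [Nonempty I]
    [DecidableEq I]
    (w : I → ℝ) (μ : I → J → ℝ) (S : J → ℝ)
    (hw : ∀ i, 0 < w i) (hS : ∀ j, 0 < S j)
    (T : I → (I → ℝ) → ℝ)
    (hT : ∀ i₂ V, T i₂ V =
      ∑ j, S j * Real.exp (μ i₂ j) / (∑ i, w i * Real.exp (μ i j - V i))) :
    (∀ (V : I → ℝ) (i₂ : I),
      ∑ i₁, |fderiv ℝ (fun V' => Real.log (1 + T i₂ V')) V (Pi.single i₁ 1)|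
        = ∑ i₁, fderiv ℝ (fun V' => Real.log (1 + T i₂ V')) V (Pi.single i₁ 1)) ∧
    (∀ (V : I → ℝ) (i₂ : I),
      ∑ i₁, fderiv ℝ (fun V' => Real.log (1 + T i₂ V')) V (Pi.single i₁ 1)
        = T i₂ V / (1 + T i₂ V)) ∧
    (∀ (V : I → ℝ) (i₂ : I), T i₂ V / (1 + T i₂ V) < 1) ∧
    (∀ c : ℝ, c < 1 → (∀ (i₂ : I) (V : I → ℝ), T i₂ V / (1 + T i₂ V) ≤ c) →
      ∀ V₁ V₂ : I → ℝ,
        ‖(fun i₂ => Real.log (1 + T i₂ V₁)) - (fun i₂ => Real.log (1 + T i₂ V₂))‖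
          ≤ ‖V₁ - V₂‖) := by
  have hTeq : ∀ i₂, T i₂ = fun V => ∑ j, S j * exp (μ i₂ j) / partitionFn w μ V j :=
    fun i₂ => funext (hT i₂)
  have ha : ∀ i₂ j, 0 ≤ S j * exp (μ i₂ j) := fun i₂ j => (mul_pos (hS j) (exp_pos _)).le
  have hT0 : ∀ i₂ V, 0 ≤ T i₂ V := fun i₂ => hTeq i₂ ▸ sum_div_partitionFn_nonneg μ hw (ha i₂)
  have hmono : ∀ i₂, Monotone (T i₂) := fun i₂ =>
    hTeq i₂ ▸ monotone_sum_div_partitionFn μ hw (ha i₂)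
  have hshift : ∀ i₂ V (c : ℝ), T i₂ (V + c • 1) = exp c * T i₂ V := fun i₂ =>
    hTeq i₂ ▸ sum_div_partitionFn_add_smul_one μ
  have hdiff : ∀ i₂, Differentiable ℝ (T i₂) := fun i₂ =>
    hTeq i₂ ▸ differentiable_sum_div_partitionFn μ hw
  have hΦmono : ∀ i₂, Monotone fun V => log (1 + T i₂ V) := fun i₂ =>
    monotone_log_one_add (hT0 i₂) (hmono i₂)
  have hlip : ∀ i₂, LipschitzWith 1 fun V => log (1 + T i₂ V) := fun i₂ =>
    (hΦmono i₂).lipschitzWith_one_of_add_smul_one_le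
      fun V _ hc => log_one_add_add_smul_one_le (hT0 i₂ V) (hshift i₂ V _) hc
  refine ⟨fun V i₂ => sum_congr rfl fun i₁ _ => abs_of_nonneg ?_,
    fun V i₂ => sum_fderiv_log_one_add_apply_single (hT0 i₂ V) (hshift i₂ V) (hdiff i₂ V),
    fun V i₂ => (div_lt_one (by linarith [hT0 i₂ V])).2 (by linarith),
    fun _ _ _ V₁ V₂ => (pi_norm_le_iff_of_nonneg (norm_nonneg _)).2 fun i₂ => ?_⟩
  · exact (hΦmono i₂).fderiv_apply_nonneg V (by simp)
  · simpa using (hlip i₂).norm_sub_le V₁ V₂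

theorem stmt19 {I J : Type*} [Fintype I] [Fintype J] [Nonempty I] [Nonempty J]
    [DecidableEq I]
    (w : I → ℝ) (μ : I → J → ℝ) (S : J → ℝ)
    (hw : ∀ i, 0 < w i) (hS : ∀ j, 0 < S j)
    (T : I → (I → ℝ) → ℝ)
    (hT : ∀ i₂ V, T i₂ V =
      ∑ j, S j * Real.exp (μ i₂ j) / (∑ i, w i * Real.exp (μ i j - V i))) :
    (∀ (V : I → ℝ) (i₂ : I),
      ∑ i₁, |fderiv ℝ (fun V' => Real.log (1 + T i₂ V')) V (Pi.single i₁ 1)|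
        = ∑ i₁, fderiv ℝ (fun V' => Real.log (1 + T i₂ V')) V (Pi.single i₁ 1)) ∧
    (∀ (V : I → ℝ) (i₂ : I),
      ∑ i₁, fderiv ℝ (fun V' => Real.log (1 + T i₂ V')) V (Pi.single i₁ 1)
        = T i₂ V / (1 + T i₂ V)) ∧
    (∀ (V : I → ℝ) (i₂ : I), T i₂ V / (1 + T i₂ V) < 1) ∧
    (∀ c : ℝ, c < 1 → (∀ (i₂ : I) (V : I → ℝ), T i₂ V / (1 + T i₂ V) ≤ c) →
      ∀ V₁ V₂ : I → ℝ,
        ‖(fun i₂ => Real.log (1 + T i₂ V₁)) - (fun i₂ => Real.log (1 + T i₂ V₂))‖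
          ≤ ‖V₁ - V₂‖) :=
  stmt19_general w μ S hw hS T hT
end
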